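/- arXiv:2509.01123 — 6 statements merged into one kernel-verified Lean document; each statement's English description precedes it below -/
import Mathlib

section
/- Let σ_y > 0, ν > 0, and σ_0 > 0 be real numbers, let N ≥ 1 be the number of agents and M ≥ 1 the number of modes. For each agent j and mode i, define sequences by σ_j^{(i)}[0] = σ_0, the Bayesian posterior update σ_j^{(i)+}[k] = σ_j^{(i)}[k] − (σ_j^{(i)}[k])² / (σ_j^{(i)}[k] + σ_y), and the social update σ_j^{(i)}[k+1] = σ_j^{(i)+}[k] + F_j^{(i)}(σ^{(i)+}[k]), where each F_j^{(i)} : ℝ^N → ℝ satisfies F_j^{(i)}(x, x, …, x) = ν for every x ∈ ℝ. Then for every mode i and every agent j, σ_j^{(i)}[k] → σ^∞ := (ν + √(ν² + 4νσ_y)) / 2 as k → ∞. -/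
open Filter Topology

noncomputable def fbAux (σy ν x : ℝ) : ℝ := x - x ^ 2 / (x + σy) + ν

noncomputable def sqAux (σy ν σ0 : ℝ) : ℕ → ℝ
  | 0 => σ0
  | k + 1 => fbAux σy ν (sqAux σy ν σ0 k)

lemma fbAux_eq (σy ν x : ℝ) (hx : x + σy ≠ 0) :
    fbAux σy ν x = x * σy / (x + σy) + ν := by
  unfold fbAux; field_simp; ring

lemma sqAux_pos (σy ν σ0 : ℝ) (hσy : 0 < σy) (hν : 0 < ν) (hσ0 : 0 < σ0) :
    ∀ k, 0 < sqAux σy ν σ0 k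
  | 0 => hσ0
  | k + 1 => by
      have h := sqAux_pos σy ν σ0 hσy hν hσ0 k
      have hd : 0 < sqAux σy ν σ0 k + σy := by linarith
      rw [sqAux, fbAux_eq _ _ _ hd.ne']
      have h1 : 0 < sqAux σy ν σ0 k * σy := mul_pos h hσy
      have h2 : 0 < sqAux σy ν σ0 k * σy / (sqAux σy ν σ0 k + σy) := div_pos h1 hd
      linarith

lemma sqAux_ge (σy ν σ0 : ℝ) (hσy : 0 < σy) (hν : 0 < ν) (hσ0 : 0 < σ0) (k : ℕ) :
    ν ≤ sqAux σy ν σ0 (k + 1) := by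
  have h := sqAux_pos σy ν σ0 hσy hν hσ0 k
  have hd : 0 < sqAux σy ν σ0 k + σy := by linarith
  rw [sqAux, fbAux_eq _ _ _ hd.ne']
  have h2 : 0 < sqAux σy ν σ0 k * σy / (sqAux σy ν σ0 k + σy) :=
    div_pos (mul_pos h hσy) hd
  linarith

lemma fbAux_sub (σy ν x L : ℝ) (hx : x + σy ≠ 0) (hl : L + σy ≠ 0) :
    fbAux σy ν x - fbAux σy ν L = σy ^ 2 / ((x + σy) * (L + σy)) * (x - L) := by
  rw [fbAux_eq _ _ _ hx, fbAux_eq _ _ _ hl]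
  field_simp
  ring

/-- With symmetric initialization and a social update contributing a
constant network bias ν > 0 on identical variances, every agent's belief variance
converges to σ^∞ = (ν + √(ν² + 4νσ_y))/2. -/
theorem variance_convergence_with_bias
    (σy ν σ0 : ℝ) (hσy : 0 < σy) (hν : 0 < ν) (hσ0 : 0 < σ0)
    (N M : ℕ) (hN : 1 ≤ N) (hM : 1 ≤ M)
    (F : Fin M → Fin N → (Fin N → ℝ) → ℝ)
    (hF : ∀ (i : Fin M) (j : Fin N) (x : ℝ), F i j (fun _ => x) = ν)
    (σ σpost : Fin M → Fin N → ℕ → ℝ)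
    (hinit : ∀ (i : Fin M) (j : Fin N), σ i j 0 = σ0)
    (hpost : ∀ (i : Fin M) (j : Fin N) (k : ℕ),
      σpost i j k = σ i j k - (σ i j k) ^ 2 / (σ i j k + σy))
    (hsoc : ∀ (i : Fin M) (j : Fin N) (k : ℕ),
      σ i j (k + 1) = σpost i j k + F i j (fun l => σpost i l k)) :
    ∀ (i : Fin M) (j : Fin N),
      Tendsto (fun k => σ i j k) atTop (𝓝 ((ν + Real.sqrt (ν ^ 2 + 4 * ν * σy)) / 2)) := by
  set L : ℝ := (ν + Real.sqrt (ν ^ 2 + 4 * ν * σy)) / 2 with hL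
  set s : ℕ → ℝ := sqAux σy ν σ0 with hs
  -- basic facts about L
  have hrad : (0:ℝ) ≤ ν ^ 2 + 4 * ν * σy := by positivity
  have hr2 : Real.sqrt (ν ^ 2 + 4 * ν * σy) ^ 2 = ν ^ 2 + 4 * ν * σy :=
    Real.sq_sqrt hrad
  have hrge : ν ≤ Real.sqrt (ν ^ 2 + 4 * ν * σy) := by
    have := Real.sqrt_le_sqrt (show ν ^ 2 ≤ ν ^ 2 + 4 * ν * σy by nlinarith)
    rwa [Real.sqrt_sq hν.le] at this
  have hLν : ν ≤ L := by rw [hL]; linarith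
  have hLpos : 0 < L := lt_of_lt_of_le hν hLν
  have hLeq : L ^ 2 = ν * L + ν * σy := by
    rw [hL]; nlinarith [hr2]
  have hLd : (0:ℝ) < L + σy := by linarith
  have hfbL : fbAux σy ν L = L := by
    rw [fbAux_eq _ _ _ hLd.ne']
    field_simp
    nlinarith [hLeq]
  -- the sequence facts
  have hspos : ∀ k, 0 < s k := sqAux_pos σy ν σ0 hσy hν hσ0
  have hsge : ∀ k, ν ≤ s (k + 1) := sqAux_ge σy ν σ0 hσy hν hσ0
  set q : ℝ := (σy / (ν + σy)) ^ 2 with hq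
  have hq0 : 0 ≤ q := by positivity
  have hq1 : q < 1 := by
    rw [hq]
    have h1 : σy / (ν + σy) < 1 := by
      rw [div_lt_one (by linarith)]; linarith
    have h2 : 0 ≤ σy / (ν + σy) := by positivity
    nlinarith
  -- contraction
  have hcontr : ∀ x : ℝ, ν ≤ x → |fbAux σy ν x - L| ≤ q * |x - L| := by
    intro x hx
    have hxd : (0:ℝ) < x + σy := by linarith
    have key : fbAux σy ν x - L = σy ^ 2 / ((x + σy) * (L + σy)) * (x - L) := by
      conv_lhs => rw [← hfbL]
      exact fbAux_sub σy ν x L hxd.ne' hLd.ne'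
    rw [key, abs_mul]
    have hc : |σy ^ 2 / ((x + σy) * (L + σy))| = σy ^ 2 / ((x + σy) * (L + σy)) :=
      abs_of_nonneg (by positivity)
    rw [hc]
    have hb : σy ^ 2 / ((x + σy) * (L + σy)) ≤ q := by
      rw [hq, div_pow]
      apply div_le_div_of_nonneg_left (by positivity) (by positivity)
      nlinarith
    exact mul_le_mul_of_nonneg_right hb (abs_nonneg _)
  -- geometric bound
  have hgeom : ∀ k, |s (k + 1) - L| ≤ q ^ k * |s 1 - L| := by
    intro k
    induction k with
    | zero => simp
    | succ k ih =>
        have h1 : s (k + 1 + 1) = fbAux σy ν (s (k + 1)) := rfl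
        calc |s (k + 1 + 1) - L| ≤ q * |s (k + 1) - L| := by
              rw [h1]; exact hcontr _ (hsge k)
          _ ≤ q * (q ^ k * |s 1 - L|) := by
              apply mul_le_mul_of_nonneg_left ih hq0
          _ = q ^ (k + 1) * |s 1 - L| := by ring
  -- convergence of s
  have htend0 : Tendsto (fun k => q ^ k * |s 1 - L|) atTop (𝓝 0) := by
    have := tendsto_pow_atTop_nhds_zero_of_lt_one hq0 hq1
    simpa using this.mul_const |s 1 - L|
  have htendshift : Tendsto (fun k => s (k + 1)) atTop (𝓝 L) := by
    rw [tendsto_iff_dist_tendsto_zero]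
    apply squeeze_zero (fun k => dist_nonneg) _ htend0
    intro k
    rw [Real.dist_eq]
    exact hgeom k
  have htends : Tendsto s atTop (𝓝 L) :=
    (tendsto_add_atTop_iff_nat 1).mp htendshift
  -- identification: σ i j k = s k
  have hid : ∀ (i : Fin M) (k : ℕ) (j : Fin N), σ i j k = s k := by
    intro i k
    induction k with
    | zero => intro j; rw [hinit]; rfl
    | succ k ih =>
        intro j
        have hpc : ∀ l : Fin N, σpost i l k = s k - (s k) ^ 2 / (s k + σy) := by
          intro l; rw [hpost, ih l]
        have hfun : (fun l => σpost i l k) =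
            (fun _ => s k - (s k) ^ 2 / (s k + σy)) := funext hpc
        rw [hsoc, hfun, hF, hpc j]
        show _ = fbAux σy ν (s k)
        rw [fbAux]
  intro i j
  have : (fun k => σ i j k) = s := funext (fun k => hid i k j)
  rw [this]
  exact htends
end

section
/- Let σ_y > 0, ν > 0, and σ[0] > 0, and define a real sequence by the recursion σ[k+1] = σ[k]·σ_y / (σ[k] + σ_y) + ν. Then σ[k] → (ν + √(ν² + 4νσ_y)) / 2 as k → ∞. -/
open Filter Topology

/-- The scalar biased variance recursion σ[k+1] = σ[k]·σ_y/(σ[k]+σ_y) + ν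
with σ_y > 0, ν > 0 and σ[0] > 0 converges to (ν + √(ν² + 4νσ_y))/2. -/
theorem scalar_variance_tendsto_fixed_point
    (σy ν : ℝ) (hσy : 0 < σy) (hν : 0 < ν)
    (σ : ℕ → ℝ) (hσ0 : 0 < σ 0)
    (hrec : ∀ k : ℕ, σ (k + 1) = σ k * σy / (σ k + σy) + ν) :
    Tendsto σ atTop (𝓝 ((ν + Real.sqrt (ν ^ 2 + 4 * ν * σy)) / 2)) := by
  set L : ℝ := (ν + Real.sqrt (ν ^ 2 + 4 * ν * σy)) / 2 with hLdef
  have hsq : Real.sqrt (ν ^ 2 + 4 * ν * σy) ^ 2 = ν ^ 2 + 4 * ν * σy :=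
    Real.sq_sqrt (by positivity)
  have hsge : ν ≤ Real.sqrt (ν ^ 2 + 4 * ν * σy) := by
    nlinarith [Real.sqrt_nonneg (ν ^ 2 + 4 * ν * σy)]
  have hLν : ν ≤ L := by rw [hLdef]; linarith
  have hL2 : L ^ 2 = ν * L + ν * σy := by
    rw [hLdef]; nlinarith [hsq]
  have hLσ : 0 < L + σy := by linarith
  have hfixL : L * σy / (L + σy) + ν = L := by
    field_simp
    linarith [hL2]
  -- positivity of the sequence
  have hpos : ∀ n, 0 < σ n := by
    intro n
    induction n with
    | zero => exact hσ0
    | succ k ih =>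
      rw [hrec k]
      have h1 : 0 < σ k + σy := by linarith
      positivity
  have hge : ∀ n, ν ≤ σ (n + 1) := by
    intro n
    rw [hrec n]
    have h1 : 0 < σ n + σy := by linarith [hpos n]
    have : 0 ≤ σ n * σy / (σ n + σy) :=
      div_nonneg (mul_nonneg (hpos n).le hσy.le) h1.le
    linarith
  set q : ℝ := (σy / (ν + σy)) ^ 2 with hqdef
  have hq0 : 0 ≤ q := by positivity
  have hq1 : q < 1 := by
    rw [hqdef]
    have h1 : σy / (ν + σy) < 1 := by
      rw [div_lt_one (by linarith)]; linarith
    have h2 : 0 ≤ σy / (ν + σy) := by positivity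
    nlinarith
  -- contraction step
  have hstep : ∀ x : ℝ, ν ≤ x → |x * σy / (x + σy) + ν - L| ≤ q * |x - L| := by
    intro x hx
    have hxσ : 0 < x + σy := by linarith
    have key : x * σy / (x + σy) + ν - L = σy ^ 2 * (x - L) / ((x + σy) * (L + σy)) := by
      have h1 : x * σy / (x + σy) + ν - L = x * σy / (x + σy) - L * σy / (L + σy) := by
        linarith [hfixL]
      rw [h1]
      field_simp
      ring
    rw [key]
    have hden : (ν + σy) ^ 2 ≤ (x + σy) * (L + σy) := by nlinarith
    have hnum : 0 ≤ σy ^ 2 * |x - L| := by positivity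
    have habs : |σy ^ 2 * (x - L) / ((x + σy) * (L + σy))|
        = σy ^ 2 * |x - L| / ((x + σy) * (L + σy)) := by
      rw [abs_div, abs_mul, abs_of_nonneg (sq_nonneg σy), abs_of_pos (mul_pos hxσ hLσ)]
    rw [habs]
    have h2 : σy ^ 2 * |x - L| / ((x + σy) * (L + σy)) ≤ σy ^ 2 * |x - L| / ((ν + σy) ^ 2) :=
      div_le_div_of_nonneg_left hnum (by positivity) hden
    calc σy ^ 2 * |x - L| / ((x + σy) * (L + σy)) ≤ σy ^ 2 * |x - L| / ((ν + σy) ^ 2) := h2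
      _ = q * |x - L| := by rw [hqdef]; field_simp
  -- geometric bound
  have hbound : ∀ n, |σ (n + 1) - L| ≤ q ^ n * |σ 1 - L| := by
    intro n
    induction n with
    | zero => simp
    | succ k ih =>
      have h1 : |σ (k + 2) - L| ≤ q * |σ (k + 1) - L| := by
        rw [hrec (k + 1)]
        exact hstep _ (hge k)
      calc |σ (k + 2) - L| ≤ q * |σ (k + 1) - L| := h1
        _ ≤ q * (q ^ k * |σ 1 - L|) := by
            exact mul_le_mul_of_nonneg_left ih hq0
        _ = q ^ (k + 1) * |σ 1 - L| := by ring
  have hgeo : Tendsto (fun n : ℕ => q ^ n * |σ 1 - L|) atTop (𝓝 0) := by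
    have := (tendsto_pow_atTop_nhds_zero_of_lt_one hq0 hq1).mul_const (|σ 1 - L|)
    simpa using this
  have h0 : Tendsto (fun n : ℕ => σ (n + 1) - L) atTop (𝓝 0) :=
    squeeze_zero_norm (fun n => by simpa using hbound n) hgeo
  have h1 : Tendsto (fun n : ℕ => σ (n + 1)) atTop (𝓝 L) := by
    have := h0.add_const L
    simpa using this
  exact (tendsto_add_atTop_iff_nat 1).mp h1
end

section
/- Let σ_y > 0 and ν > 0, and define g : ℝ → ℝ by g(x) = x·σ_y / (x + σ_y) + ν. Then for all x, y ∈ [ν, ∞), |g(x) − g(y)| ≤ (σ_y² / (ν + σ_y)²)·|x − y|, and the constant σ_y² / (ν + σ_y)² is strictly less than 1; hence g is a contraction on [ν, ∞). -/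
/-- g(x) = x·σ_y/(x+σ_y) + ν is Lipschitz on [ν, ∞) with constant
σ_y²/(ν+σ_y)², a constant strictly less than 1; hence g is a contraction on [ν, ∞). -/
theorem g_is_contraction
    (σy ν : ℝ) (hσy : 0 < σy) (hν : 0 < ν)
    (g : ℝ → ℝ) (hg : ∀ x : ℝ, g x = x * σy / (x + σy) + ν) :
    (∀ x y : ℝ, ν ≤ x → ν ≤ y →
      |g x - g y| ≤ σy ^ 2 / (ν + σy) ^ 2 * |x - y|) ∧
    σy ^ 2 / (ν + σy) ^ 2 < 1 := by
  have hνσ : 0 < ν + σy := by linarith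
  constructor
  · intro x y hx hy
    have hxσ : 0 < x + σy := by linarith
    have hyσ : 0 < y + σy := by linarith
    have key : g x - g y = σy ^ 2 * (x - y) / ((x + σy) * (y + σy)) := by
      rw [hg, hg]
      field_simp
      ring
    rw [key, abs_div, abs_of_pos (mul_pos hxσ hyσ), abs_mul, abs_of_pos (by positivity : (0:ℝ) < σy ^ 2)]
    rw [div_le_iff₀ (mul_pos hxσ hyσ)]
    have h1 : (ν + σy) ^ 2 ≤ (x + σy) * (y + σy) := by nlinarith
    calc σy ^ 2 * |x - y| = σy ^ 2 * |x - y| / (ν + σy) ^ 2 * (ν + σy) ^ 2 := by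
          field_simp
      _ ≤ σy ^ 2 * |x - y| / (ν + σy) ^ 2 * ((x + σy) * (y + σy)) := by
          gcongr
      _ = σy ^ 2 / (ν + σy) ^ 2 * |x - y| * ((x + σy) * (y + σy)) := by
          ring
  · rw [div_lt_one (by positivity)]
    nlinarith
end

section
/- Let N ≥ 1, let W be a real N × N matrix, let D be the diagonal N × N matrix with D_{jj} = Σ_ℓ W_{ℓj}, let δ_μ > 0, let c ∈ (0, 1), set Σ = c·I and A = Σ(I + δ_μ W − δ_μ D), and let θ ∈ ℝ. Assume (W − D)·𝟙 = 0, where 𝟙 ∈ ℝ^N is the all-ones vector, and assume the spectral radius of A (over ℂ) is strictly less than 1. Then the sequence m[k] ∈ ℝ^N defined by m[k+1] = A·m[k] + (I − Σ)·𝟙·θ converges to 𝟙·θ as k → ∞, for any initial vector m[0]. -/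
open Filter Topology Matrix
open scoped ENNReal NNReal

section Aux

attribute [local instance] Matrix.linftyOpNormedRing Matrix.linftyOpNormedAlgebra

private lemma norm_pow_tendsto_zero_aux {N : ℕ} (hN : 1 ≤ N)
    (B : Matrix (Fin N) (Fin N) ℂ) (h : ∀ z ∈ spectrum ℂ B, ‖z‖ < 1) :
    Tendsto (fun n : ℕ => ‖B ^ n‖) atTop (𝓝 0) := by
  haveI : NeZero N := ⟨by omega⟩
  haveI : CompleteSpace (Matrix (Fin N) (Fin N) ℂ) := FiniteDimensional.complete ℂ _
  have hρ : spectralRadius ℂ B < 1 := by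
    have := spectrum.spectralRadius_lt_of_forall_lt B (r := 1) fun z hz => by
      simpa [← NNReal.coe_lt_coe] using h z hz
    simpa using this
  obtain ⟨r, hr1, hr2⟩ := ENNReal.lt_iff_exists_nnreal_btwn.mp hρ
  have hg := spectrum.pow_nnnorm_pow_one_div_tendsto_nhds_spectralRadius B
  have hev : ∀ᶠ n : ℕ in atTop, (‖B ^ n‖₊ : ℝ≥0∞) ^ (1 / (n : ℝ)) < (r : ℝ≥0∞) :=
    hg.eventually_lt_const hr1
  have hr2' : (r : ℝ) < 1 := by exact_mod_cast hr2
  have hbound : ∀ᶠ n : ℕ in atTop, ‖B ^ n‖ ≤ (r : ℝ) ^ n := by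
    filter_upwards [hev, Filter.eventually_ge_atTop 1] with n hn hn1
    have hne : (n : ℝ) ≠ 0 := by positivity
    have h1 : ((‖B ^ n‖₊ : ℝ≥0∞) ^ (1 / (n : ℝ))) ^ (n : ℕ) < (r : ℝ≥0∞) ^ n := by
      apply ENNReal.pow_lt_pow_left (by omega) hn
    rw [← ENNReal.rpow_natCast (((‖B ^ n‖₊ : ℝ≥0∞)) ^ (1 / (n : ℝ))), ← ENNReal.rpow_mul,
      one_div_mul_cancel hne, ENNReal.rpow_one] at h1
    have h2 : (‖B ^ n‖₊ : ℝ≥0∞) < ((r ^ n : ℝ≥0) : ℝ≥0∞) := by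
      rwa [ENNReal.coe_pow]
    have h3 : ‖B ^ n‖₊ < r ^ n := by exact_mod_cast h2
    calc ‖B ^ n‖ = ((‖B ^ n‖₊ : ℝ≥0) : ℝ) := rfl
    _ ≤ ((r ^ n : ℝ≥0) : ℝ) := by exact_mod_cast h3.le
    _ = (r : ℝ) ^ n := by push_cast; ring
  have hgeo : Tendsto (fun n : ℕ => (r : ℝ) ^ n) atTop (𝓝 0) :=
    tendsto_pow_atTop_nhds_zero_of_lt_one r.coe_nonneg hr2'
  exact squeeze_zero' (Filter.Eventually.of_forall fun n => norm_nonneg _) hbound hgeo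

private lemma entry_pow_tendsto_zero {N : ℕ} (hN : 1 ≤ N)
    (A : Matrix (Fin N) (Fin N) ℝ)
    (hρ : ∀ z ∈ spectrum ℂ (A.map (fun a : ℝ => (a : ℂ))), ‖z‖ < 1) (i j : Fin N) :
    Tendsto (fun k : ℕ => (A ^ k) i j) atTop (𝓝 0) := by
  set B : Matrix (Fin N) (Fin N) ℂ := A.map (fun a : ℝ => (a : ℂ)) with hB
  have hmap : ∀ k : ℕ, (A ^ k).map (fun a : ℝ => (a : ℂ)) = B ^ k := by
    intro k
    have : (Complex.ofRealHom.mapMatrix : Matrix (Fin N) (Fin N) ℝ →+* _) (A ^ k)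
        = (Complex.ofRealHom.mapMatrix A) ^ k := map_pow _ _ _
    exact this
  have hnorm := norm_pow_tendsto_zero_aux hN B hρ
  have hentry : ∀ k : ℕ, |(A ^ k) i j| ≤ ‖B ^ k‖ := by
    intro k
    have h1 : ‖(B ^ k) i j‖₊ ≤ ‖B ^ k‖₊ := by
      rw [Matrix.linfty_opNNNorm_def]
      calc ‖(B ^ k) i j‖₊ ≤ ∑ j', ‖(B ^ k) i j'‖₊ :=
            Finset.single_le_sum (f := fun j' => ‖(B ^ k) i j'‖₊) (fun _ _ => by positivity) (Finset.mem_univ j)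
      _ ≤ _ := Finset.le_sup (f := fun i' => ∑ j', ‖(B ^ k) i' j'‖₊) (Finset.mem_univ i)
    have h2 : ‖(B ^ k) i j‖ ≤ ‖B ^ k‖ := h1
    have h3 : (B ^ k) i j = ((A ^ k) i j : ℂ) := by
      rw [← hmap k]; rfl
    rwa [h3, Complex.norm_real, Real.norm_eq_abs] at h2
  exact squeeze_zero_norm (fun k => by simpa using hentry k) hnorm

end Aux

/-- Convergence of the expected mean beliefs (Theorem 3, mean analysis):
with D the diagonal matrix of in-weights, Σ = c·I with c ∈ (0,1), A = Σ(I + δW − δD),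
(W − D)𝟙 = 0, and spectral radius of A (over ℂ) less than 1, the iteration
m[k+1] = A m[k] + (I − Σ)𝟙θ converges to 𝟙θ from any initial vector. -/
theorem mean_dynamics_wisdom_of_crowds
    (N : ℕ) (hN : 1 ≤ N) (W D Sig A : Matrix (Fin N) (Fin N) ℝ)
    (δ c θ : ℝ) (hδ : 0 < δ) (hc : c ∈ Set.Ioo (0 : ℝ) 1)
    (hD : D = Matrix.diagonal fun j => ∑ l, W l j)
    (hSig : Sig = c • (1 : Matrix (Fin N) (Fin N) ℝ))
    (hA : A = Sig * (1 + δ • W - δ • D))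
    (hones : (W - D) *ᵥ (fun _ => (1 : ℝ)) = 0)
    (hρ : ∀ z ∈ spectrum ℂ (A.map (fun a : ℝ => (a : ℂ))), ‖z‖ < 1)
    (m : ℕ → Fin N → ℝ)
    (hrec : ∀ k : ℕ, m (k + 1) = A *ᵥ m k + (1 - Sig) *ᵥ (fun _ => θ)) :
    Tendsto m atTop (𝓝 fun _ => θ) := by
  -- the fixed point computation: A *ᵥ 𝟙 = c • 𝟙
  set ones : Fin N → ℝ := fun _ => (1 : ℝ) with hones_def
  have hA1 : A *ᵥ ones = c • ones := by
    have h1 : (1 + δ • W - δ • D) *ᵥ ones = ones := by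
      have : (1 + δ • W - δ • D) = 1 + δ • (W - D) := by
        rw [smul_sub, add_sub_assoc]
      rw [this, Matrix.add_mulVec, Matrix.one_mulVec, Matrix.smul_mulVec, hones,
        smul_zero, add_zero]
    rw [hA, ← Matrix.mulVec_mulVec, h1, hSig, Matrix.smul_mulVec, Matrix.one_mulVec]
  have hfix : A *ᵥ (fun _ => θ) + (1 - Sig) *ᵥ (fun _ => θ) = (fun _ => θ) := by
    have hθ : (fun _ => θ : Fin N → ℝ) = θ • ones := by
      funext i; simp [hones_def]
    rw [hθ, Matrix.mulVec_smul, hA1, Matrix.sub_mulVec, Matrix.one_mulVec, hSig,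
      Matrix.smul_mulVec, Matrix.one_mulVec]
    funext i
    simp [hones_def]
    ring
  -- closed form
  set v : Fin N → ℝ := fun i => m 0 i - θ with hv
  have hform : ∀ k : ℕ, m k = (A ^ k) *ᵥ v + (fun _ => θ) := by
    intro k
    induction k with
    | zero =>
      funext i
      simp [hv]
    | succ k ih =>
      have h5 : A *ᵥ ((A ^ k) *ᵥ v) = (A ^ (k + 1)) *ᵥ v := by
        rw [Matrix.mulVec_mulVec, ← pow_succ']
      rw [hrec k, ih, Matrix.mulVec_add, h5, add_assoc, hfix]
  -- entrywise convergence
  rw [tendsto_pi_nhds]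
  intro i
  have hsum : Tendsto (fun k : ℕ => ((A ^ k) *ᵥ v) i) atTop (𝓝 0) := by
    have : ∀ k : ℕ, ((A ^ k) *ᵥ v) i = ∑ j, (A ^ k) i j * v j := fun k => rfl
    simp only [this]
    have h0 : (0 : ℝ) = ∑ j : Fin N, 0 := by simp
    rw [h0]
    exact tendsto_finset_sum _ fun j _ =>
      by simpa using (entry_pow_tendsto_zero hN A hρ i j).mul_const (v j)
  have := hsum.add_const θ
  simp only [zero_add] at this
  refine this.congr fun k => ?_
  rw [hform k]
  simp
end

section
/- Let N ≥ 1, let W be a real N × N matrix, let D be the diagonal N × N matrix with D_{jj} = Σ_ℓ W_{ℓj}, let δ_μ > 0, let σ_y > 0 and σ^∞ > 0, set c = σ_y/(σ^∞ + σ_y), Σ = c·I, and A = Σ(I + δ_μ W − δ_μ D). Assume (W − D)·𝟙 = 0, where 𝟙 ∈ ℝ^N is the all-ones vector. Then the matrix P_∞ = (σ_y σ^∞ / (σ^∞ + 2σ_y))·𝟙𝟙ᵀ satisfies the steady-state equation P_∞ = A P_∞ Aᵀ + σ_y (I − Σ) 𝟙𝟙ᵀ (I − Σ). -/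
open Filter Topology Matrix

/-- The matrix P_∞ = (σ_y σ^∞/(σ^∞ + 2σ_y))·𝟙𝟙ᵀ satisfies the
steady-state covariance equation P_∞ = A P_∞ Aᵀ + σ_y (I − Σ) 𝟙𝟙ᵀ (I − Σ),
where A = Σ(I + δW − δD), Σ = (σ_y/(σ^∞+σ_y))·I, D is the diagonal matrix of
in-weights, and (W − D)𝟙 = 0. -/
theorem steady_state_covariance_equation
    (N : ℕ) (hN : 1 ≤ N) (W D Sig A : Matrix (Fin N) (Fin N) ℝ)
    (δ σy σinf c : ℝ) (hδ : 0 < δ) (hσy : 0 < σy) (hσinf : 0 < σinf)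
    (hc : c = σy / (σinf + σy))
    (hD : D = Matrix.diagonal fun j => ∑ l, W l j)
    (hSig : Sig = c • (1 : Matrix (Fin N) (Fin N) ℝ))
    (hA : A = Sig * (1 + δ • W - δ • D))
    (hones : (W - D) *ᵥ (fun _ => (1 : ℝ)) = 0)
    (J : Matrix (Fin N) (Fin N) ℝ)
    (hJ : J = Matrix.vecMulVec (fun _ => (1 : ℝ)) (fun _ => (1 : ℝ))) :
    (σy * σinf / (σinf + 2 * σy)) • J =
      A * ((σy * σinf / (σinf + 2 * σy)) • J) * Aᵀ + σy • ((1 - Sig) * J * (1 - Sig)) := by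
  set p : ℝ := σy * σinf / (σinf + 2 * σy) with hp
  -- A *ᵥ 1 = c • 1
  have hAone : A *ᵥ (fun _ => (1 : ℝ)) = fun _ => c := by
    have : A = c • (1 + δ • (W - D)) := by
      rw [hA, hSig, smul_mul_assoc, one_mul]
      congr 1
      rw [smul_sub]
      abel
    rw [this]
    ext i
    simp [Matrix.smul_mulVec, Matrix.add_mulVec, Matrix.smul_mulVec, hones]
  have hAJ : A * J = c • J := by
    rw [hJ]
    ext i j
    have := congrFun hAone i
    simp only [Matrix.mulVec, dotProduct] at this
    simp [Matrix.mul_apply, Matrix.vecMulVec_apply]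
    simpa using this
  have hJAt : J * Aᵀ = c • J := by
    rw [hJ]
    ext i j
    have := congrFun hAone j
    simp only [Matrix.mulVec, dotProduct] at this
    simp [Matrix.mul_apply, Matrix.vecMulVec_apply, Matrix.transpose_apply]
    simpa using this
  have hS : (1 - Sig) * J * (1 - Sig) = ((1 - c) * (1 - c)) • J := by
    rw [hSig]
    have h1 : (1 : Matrix (Fin N) (Fin N) ℝ) - c • 1 = (1 - c) • 1 := by
      rw [sub_smul, one_smul]
    rw [h1, smul_mul_assoc, one_mul, mul_smul_comm, Matrix.mul_one, smul_smul]
  have hleft : A * (p • J) * Aᵀ = (p * c * c) • J := by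
    rw [mul_smul_comm, smul_mul_assoc, hAJ, smul_mul_assoc, hJAt, smul_smul, smul_smul]
  rw [hleft, hS, smul_smul, ← add_smul]
  congr 1
  rw [hp, hc]
  have h1 : σinf + σy ≠ 0 := by positivity
  have h2 : σinf + 2 * σy ≠ 0 := by positivity
  field_simp
  ring
end

section
/- Let N ≥ 1, let W be a real N × N matrix, let D be the diagonal N × N matrix with D_{jj} = Σ_ℓ W_{ℓj}, let δ_μ > 0, let σ_y > 0 and σ^∞ > 0, set c = σ_y/(σ^∞ + σ_y), Σ = c·I, and A = Σ(I + δ_μ W − δ_μ D). Assume (W − D)·𝟙 = 0 and that the spectral radius of A (over ℂ) is strictly less than 1. Then, starting from P[0] = 0, the sequence of N × N matrices defined by P[k+1] = A P[k] Aᵀ + σ_y (I − Σ) 𝟙𝟙ᵀ (I − Σ) converges to P_∞ = (σ_y σ^∞ / (σ^∞ + 2σ_y))·𝟙𝟙ᵀ as k → ∞. -/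
open Filter Topology Matrix

/-- Convergence of the covariance dynamics (Theorem 3, covariance
analysis): starting from P[0] = 0, the iteration
P[k+1] = A P[k] Aᵀ + σ_y (I − Σ) 𝟙𝟙ᵀ (I − Σ) converges to
P_∞ = (σ_y σ^∞/(σ^∞ + 2σ_y))·𝟙𝟙ᵀ, where A = Σ(I + δW − δD), Σ = (σ_y/(σ^∞+σ_y))·I,
(W − D)𝟙 = 0, and the spectral radius of A (over ℂ) is less than 1. -/
theorem covariance_dynamics_convergence
    (N : ℕ) (hN : 1 ≤ N) (W D Sig A : Matrix (Fin N) (Fin N) ℝ)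
    (δ σy σinf c : ℝ) (hδ : 0 < δ) (hσy : 0 < σy) (hσinf : 0 < σinf)
    (hc : c = σy / (σinf + σy))
    (hD : D = Matrix.diagonal fun j => ∑ l, W l j)
    (hSig : Sig = c • (1 : Matrix (Fin N) (Fin N) ℝ))
    (hA : A = Sig * (1 + δ • W - δ • D))
    (hones : (W - D) *ᵥ (fun _ => (1 : ℝ)) = 0)
    (hρ : ∀ z ∈ spectrum ℂ (A.map (fun a : ℝ => (a : ℂ))), ‖z‖ < 1)
    (J : Matrix (Fin N) (Fin N) ℝ)
    (hJ : J = Matrix.vecMulVec (fun _ => (1 : ℝ)) (fun _ => (1 : ℝ)))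
    (P : ℕ → Matrix (Fin N) (Fin N) ℝ)
    (hP0 : P 0 = 0)
    (hrec : ∀ k : ℕ, P (k + 1) = A * P k * Aᵀ + σy • ((1 - Sig) * J * (1 - Sig))) :
    Tendsto P atTop (𝓝 ((σy * σinf / (σinf + 2 * σy)) • J)) := by
  have hσs : σinf + σy ≠ 0 := by positivity
  have hσ2 : σinf + 2 * σy ≠ 0 := by positivity
  have hc0 : 0 < c := by rw [hc]; positivity
  have hc1 : c < 1 := by
    rw [hc, div_lt_one (by positivity)]; linarith
  set pinf : ℝ := σy * σinf / (σinf + 2 * σy) with hpinf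
  -- A acts as c on the all-ones vector
  have hA' : A = c • (1 + δ • (W - D)) := by
    rw [hA, hSig, smul_mul_assoc, one_mul]
    module
  have hAv : A *ᵥ (fun _ => (1 : ℝ)) = c • (fun _ => (1 : ℝ)) := by
    rw [hA', Matrix.smul_mulVec]
    congr 1
    rw [Matrix.add_mulVec, Matrix.one_mulVec, Matrix.smul_mulVec, hones,
      smul_zero, add_zero]
  have hrowsum : ∀ i, ∑ l, A i l = c := by
    intro i
    have := congrFun hAv i
    simpa [Matrix.mulVec, dotProduct] using this
  have hAJ : A * J = c • J := by
    ext i j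
    simp [hJ, Matrix.mul_apply, Matrix.vecMulVec_apply, hrowsum i]
  have hJA : J * Aᵀ = c • J := by
    ext i j
    simp [hJ, Matrix.mul_apply, Matrix.vecMulVec_apply, Matrix.transpose_apply,
      hrowsum j]
  have hAJA : A * J * Aᵀ = (c ^ 2) • J := by
    rw [hAJ, Matrix.smul_mul, hJA, smul_smul, sq]
  have hSigJ : (1 - Sig) * J * (1 - Sig) = ((1 - c) ^ 2) • J := by
    have h1 : (1 : Matrix (Fin N) (Fin N) ℝ) - Sig = (1 - c) • 1 := by
      rw [hSig, sub_smul, one_smul]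
    rw [h1, Matrix.smul_mul, one_mul, Matrix.mul_smul, mul_one, smul_smul, sq]
  have key : σy * (1 - c) ^ 2 = pinf * (1 - c ^ 2) := by
    rw [hpinf, hc]; field_simp; ring
  -- closed form for P
  have hPk : ∀ k, P k = (pinf * (1 - (c ^ 2) ^ k)) • J := by
    intro k
    induction k with
    | zero => simp [hP0]
    | succ k ih =>
      rw [hrec, ih, hSigJ, Matrix.mul_smul, Matrix.smul_mul, hAJA, smul_smul,
        smul_smul, ← add_smul]
      congr 1
      rw [key, pow_succ]
      ring
  have hc2 : Tendsto (fun k : ℕ => (c ^ 2) ^ k) atTop (𝓝 0) := by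
    apply tendsto_pow_atTop_nhds_zero_of_lt_one (by positivity)
    nlinarith
  have hs : Tendsto (fun k : ℕ => pinf * (1 - (c ^ 2) ^ k)) atTop (𝓝 pinf) := by
    have h1 : Tendsto (fun k : ℕ => (1 : ℝ) - (c ^ 2) ^ k) atTop (𝓝 (1 - 0)) :=
      Tendsto.sub (tendsto_const_nhds : Tendsto (fun _ : ℕ => (1 : ℝ)) atTop (𝓝 1)) hc2
    have h2 := h1.const_mul pinf
    simpa using h2
  have := hs.smul_const J
  simp only [← hPk] at this
  exact this
end
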